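/- arXiv:0704.0918 — 3 statements merged into one kernel-verified Lean document; each statement's English description precedes it below -/
import Mathlib

section
/- Let X be an n-dimensional Gaussian random vector with mean μ and positive definite covariance matrix Σ, and let A, B, C be pairwise disjoint subsets of {1,...,n}. Then the conditional independence statement A ⫫ B | C holds for X if and only if the submatrix Σ_{A∪C, B∪C} has rank at most |C|. -/
open Matrix

/-- The conditional independence statement `A ⫫ B | C` for a Gaussian random vector
`X ~ N(μ, Σ)`: the covariance of the conditional distribution of `(X_A, X_B)` given
`X_C` has vanishing `A,B`-block, i.e. the Schur complement
`Σ_{A,B} − Σ_{A,C} Σ_{C,C}⁻¹ Σ_{C,B}` is zero.  (For a Gaussian this is equivalent to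
the factorization of the conditional density.) -/
def GaussianCondIndep {n : ℕ} (μ : Fin n → ℝ) (S : Matrix (Fin n) (Fin n) ℝ)
    (A B C : Finset (Fin n)) : Prop :=
  S.submatrix (fun a : ↥A => (a : Fin n)) (fun b : ↥B => (b : Fin n)) -
      S.submatrix (fun a : ↥A => (a : Fin n)) (fun c : ↥C => (c : Fin n)) *
        (S.submatrix (fun c : ↥C => (c : Fin n)) (fun c : ↥C => (c : Fin n)))⁻¹ *
        S.submatrix (fun c : ↥C => (c : Fin n)) (fun b : ↥B => (b : Fin n)) = 0

/-!
Index the rows of `Σ_{A∪C, B∪C}` by `A ⊕ C` and its columns by `B ⊕ C`; since these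
re-indexings are surjective (they only repeat rows or columns when `A` or `B` meets `C`), the
rank does not change, and the result is the block matrix `[[Σ_AB, Σ_AC], [Σ_CB, Σ_CC]]`.
Its corner `Σ_CC` is positive definite, hence invertible, so Guttman's rank additivity gives
`rank = |C| + rank (Σ_AB - Σ_AC Σ_CC⁻¹ Σ_CB)`, which is at most `|C|` exactly when the Schur
complement vanishes.
-/

def Finset.sumToUnion {α : Type*} [DecidableEq α] (s t : Finset α) : s ⊕ t → ↥(s ∪ t) :=
  Sum.elim (fun x => ⟨x, mem_union_left t x.2⟩) (fun x => ⟨x, mem_union_right s x.2⟩)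

theorem Finset.sumToUnion_surjective {α : Type*} [DecidableEq α] (s t : Finset α) :
    (s.sumToUnion t).Surjective := by
  rintro ⟨x, hx⟩
  rcases mem_union.mp hx with hs | ht
  · exact ⟨.inl ⟨x, hs⟩, rfl⟩
  · exact ⟨.inr ⟨x, ht⟩, rfl⟩

def Submodule.prodEquiv {R M N : Type*} [Semiring R] [AddCommMonoid M] [Module R M]
    [AddCommMonoid N] [Module R N] (p : Submodule R M) (q : Submodule R N) :
    p.prod q ≃ₗ[R] p × q :=
  { AddSubmonoid.prodEquiv p.toAddSubmonoid q.toAddSubmonoid with map_smul' := fun _ _ => rfl }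

namespace Matrix

variable {K l m n o : Type*} [Field K]

theorem rank_eq_zero_iff [Fintype n] {A : Matrix m n K} : A.rank = 0 ↔ A = 0 := by
  classical
  rw [rank, Submodule.finrank_eq_zero, LinearMap.range_eq_bot, ← toLin'_apply',
    LinearEquiv.map_eq_zero_iff]

theorem rank_fromBlocks_zero₁₂_zero₂₁ [Fintype m] [Fintype n] (A : Matrix l m K)
    (D : Matrix o n K) : (fromBlocks A 0 0 D).rank = A.rank + D.rank := by
  have h : (fromBlocks A 0 0 D).mulVecLin =
      (LinearEquiv.sumArrowLequivProdArrow l o K K).symm.toLinearMap ∘ₗ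
        A.mulVecLin.prodMap D.mulVecLin ∘ₗ
          (LinearEquiv.sumArrowLequivProdArrow m n K K).toLinearMap := by
    ext x (i | i) <;> simp [mulVec, dotProduct, Fintype.sum_sum_type]
  rw [rank, h, LinearMap.range_comp, LinearMap.range_comp, LinearEquiv.range, Submodule.map_top,
    LinearEquiv.finrank_map_eq, LinearMap.range_prodMap, (Submodule.prodEquiv _ _).finrank_eq,
    Module.finrank_prod, rank, rank]

theorem rank_fromBlocks_of_isUnit₂₂ [Fintype l] [Fintype m] [Fintype n] [DecidableEq n]
    (A : Matrix l m K) (B : Matrix l n K) (C : Matrix n m K) (D : Matrix n n K)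
    (hD : IsUnit D) :
    (fromBlocks A B C D).rank = Fintype.card n + (A - B * D⁻¹ * C).rank := by
  classical
  let _ := hD.invertible
  have hL : IsUnit (fromBlocks 1 (B * ⅟D) 0 1 : Matrix (l ⊕ n) (l ⊕ n) K).det := by simp
  have hR : IsUnit (fromBlocks 1 0 (⅟D * C) 1 : Matrix (m ⊕ n) (m ⊕ n) K).det := by simp
  rw [fromBlocks_eq_of_invertible₂₂, rank_mul_eq_left_of_isUnit_det _ _ hR,
    rank_mul_eq_right_of_isUnit_det _ _ hL, rank_fromBlocks_zero₁₂_zero₂₁, rank_of_isUnit D hD,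
    invOf_eq_nonsing_inv, add_comm]

theorem rank_submatrix_of_surjective {m₀ n₀ : Type*} [Fintype n] [Fintype n₀]
    (A : Matrix m n K) {r : m₀ → m} {c : n₀ → n} (hr : r.Surjective) (hc : c.Surjective) :
    (A.submatrix r c).rank = A.rank := by
  refine le_antisymm (rank_submatrix_le A r c) ?_
  calc A.rank
      = ((A.submatrix r c).submatrix (Function.surjInv hr) (Function.surjInv hc)).rank := by
        rw [submatrix_submatrix, (Function.rightInverse_surjInv hr).comp_eq_id,
          (Function.rightInverse_surjInv hc).comp_eq_id, submatrix_id_id]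
    _ ≤ (A.submatrix r c).rank := rank_submatrix_le _ _ _

end Matrix

theorem gaussian_condIndep_iff_rank_le_general {n : ℕ} (μ : Fin n → ℝ)
    (S : Matrix (Fin n) (Fin n) ℝ) (hS : S.PosDef)
    (A B C : Finset (Fin n)) :
    GaussianCondIndep μ S A B C ↔
      (S.submatrix (fun a : ↥(A ∪ C) => (a : Fin n))
          (fun b : ↥(B ∪ C) => (b : Fin n))).rank ≤ C.card := by
  have hT : IsUnit (S.submatrix ((↑) : C → Fin n) ((↑) : C → Fin n)) :=
    (hS.submatrix Subtype.val_injective).isUnit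
  have hblocks : (S.submatrix ((↑) : ↥(A ∪ C) → Fin n) ((↑) : ↥(B ∪ C) → Fin n)).submatrix
      (A.sumToUnion C) (B.sumToUnion C) =
        fromBlocks (S.submatrix ((↑) : A → Fin n) ((↑) : B → Fin n))
          (S.submatrix ((↑) : A → Fin n) ((↑) : C → Fin n))
          (S.submatrix ((↑) : C → Fin n) ((↑) : B → Fin n))
          (S.submatrix ((↑) : C → Fin n) ((↑) : C → Fin n)) := by
    ext (i | i) (j | j) <;> rfl
  rw [← rank_submatrix_of_surjective _ (A.sumToUnion_surjective C) (B.sumToUnion_surjective C),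
    hblocks, rank_fromBlocks_of_isUnit₂₂ _ _ _ _ hT, Fintype.card_coe, add_le_iff_nonpos_right,
    nonpos_iff_eq_zero, Matrix.rank_eq_zero_iff]
  rfl

/-- For an `n`-dimensional Gaussian vector with mean `μ` and positive definite
covariance matrix `Σ`, and pairwise disjoint `A, B, C ⊆ {1,…,n}`, the conditional
independence `A ⫫ B | C` holds iff `rank Σ_{A∪C, B∪C} ≤ #C`. -/
theorem gaussian_condIndep_iff_rank_le {n : ℕ} (μ : Fin n → ℝ)
    (S : Matrix (Fin n) (Fin n) ℝ) (hS : S.PosDef)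
    (A B C : Finset (Fin n)) (hAB : Disjoint A B) (hAC : Disjoint A C)
    (hBC : Disjoint B C) :
    GaussianCondIndep μ S A B C ↔
      (S.submatrix (fun a : ↥(A ∪ C) => (a : Fin n))
          (fun b : ↥(B ∪ C) => (b : Fin n))).rank ≤ C.card :=
  gaussian_condIndep_iff_rank_le_general μ S hS A B C
end

section
/- If T is a DAG whose underlying undirected graph is a tree (a polytree), then for any pair of vertices i, j there is at most one trek from i to j; hence each trek-rule polynomial σ_{ij}(a,λ) is a monomial and the vanishing ideal I_T of the Gaussian Bayesian network of T is a toric (prime binomial) ideal. -/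
open MvPolynomial

/-- A directed acyclic graph on vertices `{0, …, n-1}`, numerically ordered:
`i → j` only if `i < j`. -/
structure DAG (n : ℕ) where
  edge : Fin n → Fin n → Bool
  increasing : ∀ i j, edge i j = true → i < j

namespace DAG

variable {n : ℕ}

/-- Indeterminates: `a_i` for each vertex (Sum.inl) and `λ_{kl}` for each
potential edge (Sum.inr). -/
abbrev Vars (n : ℕ) := Fin n ⊕ (Fin n × Fin n)

/-- `L` is the directed path from the top down to `i`, `R` from the top down to `j`;
they share exactly the top vertex, and the resulting colliderless path is simple. -/
def IsTrek (G : DAG n) (i j : Fin n) (L R : List (Fin n)) : Prop :=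
  L ≠ [] ∧ R ≠ [] ∧ L.head? = R.head? ∧ L.getLast? = some i ∧ R.getLast? = some j ∧
    L.Chain' (fun a b => G.edge a b = true) ∧ R.Chain' (fun a b => G.edge a b = true) ∧
    (L ++ R.tail).Nodup

/-- The type of treks from `i` to `j` in `G`. -/
def Trek (G : DAG n) (i j : Fin n) : Type :=
  {p : {l : List (Fin n) // l.Nodup} × {l : List (Fin n) // l.Nodup} //
    IsTrek G i j p.1.1 p.2.1}

noncomputable instance (G : DAG n) (i j : Fin n) : Fintype (Trek G i j) := by
  classical exact Subtype.fintype _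

def Trek.left {G : DAG n} {i j : Fin n} (P : Trek G i j) : List (Fin n) := P.1.1.1
def Trek.right {G : DAG n} {i j : Fin n} (P : Trek G i j) : List (Fin n) := P.1.2.1

/-- The topmost vertex of a trek. -/
def Trek.top {G : DAG n} {i j : Fin n} (P : Trek G i j) : Fin n := P.left.head?.getD i

/-- The consecutive pairs (directed edges) of a vertex list. -/
def pathEdges (l : List (Fin n)) : List (Fin n × Fin n) := l.zip l.tail

/-- The (directed) edges used by a trek. -/
def Trek.edges {G : DAG n} {i j : Fin n} (P : Trek G i j) : List (Fin n × Fin n) :=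
  pathEdges P.left ++ pathEdges P.right

/-- The monomial `a_{top(P)} · ∏_{k→l ∈ P} λ_{kl}` of a trek. -/
noncomputable def Trek.poly {G : DAG n} {i j : Fin n} (P : Trek G i j) :
    MvPolynomial (Vars n) ℂ :=
  X (Sum.inl P.top) * (P.edges.map (fun e => X (Sum.inr e))).prod

/-- The trek-rule polynomial `σ_{ij}(a,λ) = ∑_{P ∈ T(i,j)} a_{top(P)} ∏_{k→l∈P} λ_{kl}`. -/
noncomputable def trekPoly (G : DAG n) (i j : Fin n) : MvPolynomial (Vars n) ℂ :=
  ∑ P : Trek G i j, P.poly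

/-- The parent set `pa(j)` of a vertex. -/
def parents (G : DAG n) (j : Fin n) : Finset (Fin n) :=
  Finset.univ.filter (fun k => G.edge k j = true)

/-- Index set for the entries `σ_{ij}`, `1 ≤ i ≤ j ≤ n`, of a symmetric matrix. -/
abbrev SymIdx (n : ℕ) := {p : Fin n × Fin n // p.1 ≤ p.2}

/-- The variable index `σ_{ij}` (sorted). -/
def sIdx (i j : Fin n) : SymIdx n :=
  if h : i ≤ j then ⟨(i, j), h⟩ else ⟨(j, i), le_of_not_ge h⟩

/-- The trek-rule ring homomorphism `φ_G : ℂ[σ] → ℂ[a,λ]`. -/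
noncomputable def phi (G : DAG n) :
    MvPolynomial (SymIdx n) ℂ →ₐ[ℂ] MvPolynomial (Vars n) ℂ :=
  aeval (fun p => trekPoly G p.1.1 p.1.2)

/-- The vanishing ideal `I_G = ker φ_G` of the Gaussian Bayesian network of `G`. -/
noncomputable def gaussianIdeal (G : DAG n) : Ideal (MvPolynomial (SymIdx n) ℂ) :=
  RingHom.ker (phi G)

/-- The underlying undirected graph of `G`. -/
def underlying (G : DAG n) : SimpleGraph (Fin n) where
  Adj i j := G.edge i j = true ∨ G.edge j i = true
  symm := ⟨fun i j h => h.symm⟩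
  loopless := by
    constructor
    intro i h
    rcases h with h | h <;> exact absurd (G.increasing i i h) (lt_irrefl i)

/-- A polytree: a DAG whose underlying undirected graph is a tree. -/
def IsPolytree (G : DAG n) : Prop := G.underlying.IsTree

/-- `c` is a choke point between `I` and `J`: every trek from `I` to `J` contains `c`,
and `c` is on the `I`-side of every such trek, or on the `J`-side of every such trek. -/
def IsChokePoint (G : DAG n) (I J : Set (Fin n)) (c : Fin n) : Prop :=
  (∀ i ∈ I, ∀ j ∈ J, ∀ P : Trek G i j, c ∈ P.left) ∨
  (∀ i ∈ I, ∀ j ∈ J, ∀ P : Trek G i j, c ∈ P.right)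

/-- The induced subgraph on a vertex subset `S` (kept on the same vertex set). -/
def induce (G : DAG n) (S : Finset (Fin n)) : DAG n where
  edge i j := decide (G.edge i j = true ∧ i ∈ S ∧ j ∈ S)
  increasing := by
    intro i j h
    exact G.increasing i j (of_decide_eq_true h).1

/-- Indices `σ_{ij}` with both `i, j ∈ S`. -/
abbrev SubIdx (n : ℕ) (S : Finset (Fin n)) := {p : SymIdx n // p.1.1 ∈ S ∧ p.1.2 ∈ S}

/-- The trek-rule homomorphism restricted to the variables `σ_{ij}`, `i,j ∈ S`. -/
noncomputable def phiSub (G : DAG n) (S : Finset (Fin n)) :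
    MvPolynomial (SubIdx n S) ℂ →ₐ[ℂ] MvPolynomial (Vars n) ℂ :=
  aeval (fun p => trekPoly G p.1.1.1 p.1.1.2)

/-- The ideal `I_{G,S} = I_G ∩ ℂ[σ_{ij} : i,j ∈ S]` of the model with observed
variables `S` (the remaining variables hidden). -/
noncomputable def hiddenIdeal (G : DAG n) (S : Finset (Fin n)) :
    Ideal (MvPolynomial (SubIdx n S) ℂ) :=
  RingHom.ker (phiSub G S)

end DAG

/-!
In a polytree the underlying undirected graph is acyclic, so a trek from `i` to `j`, read as the
undirected path `L.reverse ++ R.tail`, is determined by its vertex sequence; that sequence in turn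
determines the split into the two directed halves, because the top is its least vertex. Hence each
`σ_{ij}` is `0` or a monic monomial. The kernel of an algebra map sending every variable to `0` or
to a monic monomial is spanned by the binomials it contains: for `p` in the kernel and `m` in its
support, either `x^m` already lies in the kernel, or the coefficient of the image of `x^m` in
`f p = 0` must cancel against some other `x^{m'}` of the support with the same image, and
subtracting `c • (x^m - x^{m'})` shortens the support.
-/

open MvPolynomial

namespace MvPolynomial

variable {σ τ R : Type*}

def monicMonomialsWithZero (σ R : Type*) [CommSemiring R] : Submonoid (MvPolynomial σ R) where
  carrier := {p | p = 0 ∨ ∃ m, p = monomial m 1}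
  one_mem' := Or.inr ⟨0, rfl⟩
  mul_mem' := by
    rintro _ _ (rfl | ⟨m, rfl⟩) (rfl | ⟨m', rfl⟩)
    · exact Or.inl (zero_mul _)
    · exact Or.inl (zero_mul _)
    · exact Or.inl (mul_zero _)
    · exact Or.inr ⟨m + m', by rw [monomial_mul, mul_one]⟩

theorem zero_mem_monicMonomialsWithZero [CommSemiring R] :
    (0 : MvPolynomial σ R) ∈ monicMonomialsWithZero σ R :=
  Or.inl rfl

theorem X_mem_monicMonomialsWithZero [CommSemiring R] (s : σ) :
    (X s : MvPolynomial σ R) ∈ monicMonomialsWithZero σ R :=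
  Or.inr ⟨_, rfl⟩

def IsBinomial [CommSemiring R] (g : MvPolynomial σ R) : Prop :=
  ∃ (m₁ m₂ : σ →₀ ℕ) (c₁ c₂ : R), g = monomial m₁ c₁ + monomial m₂ c₂

theorem eq_monomial_of_coeff_ne_zero [CommSemiring R] {q : MvPolynomial σ R} {e : σ →₀ ℕ}
    (hq : q ∈ monicMonomialsWithZero σ R) (h : coeff e q ≠ 0) : q = monomial e 1 := by
  classical
  obtain rfl | ⟨e', rfl⟩ := hq
  · exact absurd (coeff_zero e) h
  · rw [coeff_monomial] at h
    rw [show e' = e by by_contra h'; exact h (if_neg h')]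

variable [CommRing R] (f : MvPolynomial σ R →ₐ[R] MvPolynomial τ R)

theorem map_monomial_eq_smul (m : σ →₀ ℕ) (c : R) :
    f (monomial m c) = c • f (monomial m 1) := by
  rw [← map_smul, smul_monomial, smul_eq_mul, mul_one]

theorem coeff_map_eq_sum (p : MvPolynomial σ R) (e : τ →₀ ℕ) :
    coeff e (f p) = ∑ m ∈ p.support, coeff m p * coeff e (f (monomial m 1)) := by
  conv_lhs => rw [p.as_sum, map_sum, coeff_sum]
  exact Finset.sum_congr rfl fun m _ => by rw [map_monomial_eq_smul f, coeff_smul, smul_eq_mul]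

theorem map_monomial_one_mem (hf : ∀ s, f (X s) ∈ monicMonomialsWithZero τ R)
    (m : σ →₀ ℕ) : f (monomial m 1) ∈ monicMonomialsWithZero τ R := by
  rw [← prod_X_pow_eq_monomial, map_prod]
  exact prod_mem fun s _ => by rw [map_pow]; exact pow_mem (hf s) _

theorem card_support_sub_lt {p g : MvPolynomial σ R} {m : σ →₀ ℕ} (hm : m ∈ p.support)
    (hg : g.support ⊆ p.support) (hcoeff : coeff m g = coeff m p) :
    (p - g).support.card < p.support.card := by
  classical
  refine (Finset.card_le_card fun x hx => ?_).trans_lt (Finset.card_erase_lt_of_mem hm)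
  refine Finset.mem_erase.2 ⟨?_, Finset.union_subset subset_rfl hg (support_sub _ p g hx)⟩
  rintro rfl
  simp [coeff_sub, hcoeff] at hx

theorem exists_binomial_card_support_sub_lt (hf : ∀ s, f (X s) ∈ monicMonomialsWithZero τ R)
    {p : MvPolynomial σ R} (hp : f p = 0) (hp₀ : p ≠ 0) :
    ∃ g, (f g = 0 ∧ IsBinomial g) ∧ (p - g).support.card < p.support.card := by
  classical
  obtain ⟨m, hm⟩ := support_nonempty.2 hp₀
  set c := coeff m p
  rcases map_monomial_one_mem f hf m with hzero | ⟨e, he⟩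
  · refine ⟨monomial m c, ⟨?_, m, m, c, 0, by simp⟩,
      card_support_sub_lt hm ?_ (by simp [c])⟩
    · rw [map_monomial_eq_smul f, hzero, smul_zero]
    · exact (support_monomial_subset).trans (Finset.singleton_subset_iff.2 hm)
  · obtain ⟨m', hm', hne, he'⟩ :
        ∃ m' ∈ p.support, m' ≠ m ∧ f (monomial m' 1) = monomial e 1 := by
      have hsum := coeff_map_eq_sum f p e
      rw [hp, coeff_zero, eq_comm] at hsum
      by_contra! hnone
      rw [Finset.sum_eq_single_of_mem m hm fun m' hm' hne => mul_eq_zero_of_right _ <|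
          not_not.1 fun h => hnone m' hm' hne <|
            eq_monomial_of_coeff_ne_zero (map_monomial_one_mem f hf m') h,
        he, coeff_monomial, if_pos rfl, mul_one] at hsum
      exact mem_support_iff.1 hm hsum
    refine ⟨monomial m c + monomial m' (-c), ⟨?_, m, m', c, -c, rfl⟩,
      card_support_sub_lt hm ?_
        (by rw [coeff_add, coeff_monomial, coeff_monomial, if_pos rfl, if_neg hne, add_zero])⟩
    · rw [map_add, map_monomial_eq_smul f, map_monomial_eq_smul f m', he, he', neg_smul,
        add_neg_cancel]
    · refine support_add.trans (Finset.union_subset ?_ ?_) <;>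
        exact support_monomial_subset.trans (Finset.singleton_subset_iff.2 ‹_›)

theorem ker_eq_span_binomials (hf : ∀ s, f (X s) ∈ monicMonomialsWithZero τ R) :
    RingHom.ker f = Ideal.span {g | f g = 0 ∧ IsBinomial g} := by
  refine le_antisymm (fun p hp => ?_) (Ideal.span_le.2 fun g hg => hg.1)
  induction hcard : p.support.card using Nat.strong_induction_on generalizing p with
  | _ k ih =>
    by_cases hp₀ : p = 0
    · rw [hp₀]; exact zero_mem _
    obtain ⟨g, hg, hlt⟩ := exists_binomial_card_support_sub_lt f hf hp hp₀
    rw [← sub_add_cancel p g]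
    refine add_mem (ih _ (hcard ▸ hlt) (p - g) ?_ rfl) (Ideal.subset_span hg)
    rw [RingHom.mem_ker, map_sub, RingHom.mem_ker.1 hp, hg.1, sub_zero]

end MvPolynomial

theorem le_of_mem_reverse_append_cons {α : Type*} [Preorder α] {t v : α} {L₀ R₀ : List α}
    (hL : ∀ v ∈ L₀, t < v) (hR : ∀ v ∈ R₀, t < v) (hv : v ∈ L₀.reverse ++ t :: R₀) : t ≤ v := by
  simp only [List.mem_append, List.mem_reverse, List.mem_cons] at hv
  rcases hv with hv | rfl | hv
  exacts [(hL v hv).le, le_rfl, (hR v hv).le]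

namespace DAG

variable {n : ℕ} {G : DAG n} {i j : Fin n} {L R L' R' : List (Fin n)}

theorem pairwise_lt_of_isChain {l : List (Fin n)}
    (h : l.IsChain (fun a b => G.edge a b = true)) : l.Pairwise (· < ·) :=
  (h.imp fun a b => G.increasing a b).pairwise

theorem IsTrek.exists_eq_cons (h : IsTrek G i j L R) :
    ∃ t L₀ R₀, L = t :: L₀ ∧ R = t :: R₀ ∧ (∀ v ∈ L₀, t < v) ∧ ∀ v ∈ R₀, t < v := by
  obtain ⟨hL, hR, hhead, -, -, hLchain, hRchain, -⟩ := h
  obtain ⟨t, L₀, rfl⟩ := List.exists_cons_of_ne_nil hL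
  obtain ⟨t', R₀, rfl⟩ := List.exists_cons_of_ne_nil hR
  obtain rfl : t = t' := by simpa using hhead
  exact ⟨t, L₀, R₀, rfl, rfl, (List.pairwise_cons.1 (pairwise_lt_of_isChain hLchain)).1,
    (List.pairwise_cons.1 (pairwise_lt_of_isChain hRchain)).1⟩

theorem IsTrek.eq_of_reverse_append_tail_eq (hP : IsTrek G i j L R) (hQ : IsTrek G i j L' R')
    (h : L.reverse ++ R.tail = L'.reverse ++ R'.tail) : L = L' ∧ R = R' := by
  obtain ⟨t, L₀, R₀, rfl, rfl, hL, hR⟩ := hP.exists_eq_cons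
  obtain ⟨t', L₀', R₀', rfl, rfl, hL', hR'⟩ := hQ.exists_eq_cons
  simp only [List.reverse_cons, List.tail_cons, List.append_assoc, List.singleton_append] at h
  have htop : t = t' := le_antisymm
    (le_of_mem_reverse_append_cons hL hR (h ▸ by simp))
    (le_of_mem_reverse_append_cons hL' hR' (h.symm ▸ by simp))
  subst htop
  have htL₀ : t ∉ L₀.reverse := fun ht => lt_irrefl t (hL t (List.mem_reverse.1 ht))
  have htR₀ : t ∉ R₀ := fun ht => lt_irrefl t (hR t ht)
  obtain ⟨hL₀, -, hR₀⟩ := (List.append_cons_inj_of_notMem htL₀ htR₀).1 h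
  rw [List.reverse_inj.1 hL₀, hR₀]
  exact ⟨rfl, rfl⟩

theorem IsTrek.exists_isPath (h : IsTrek G i j L R) :
    ∃ w : G.underlying.Walk i j, w.IsPath ∧ w.support = L.reverse ++ R.tail := by
  obtain ⟨hL, hR, hhead, hLlast, hRlast, hLchain, hRchain, hnodup⟩ := h
  have toAdj : ∀ {l : List (Fin n)}, l.IsChain (fun a b => G.edge a b = true) →
      l.IsChain G.underlying.Adj := fun hl => hl.imp fun _ _ => Or.inl
  have hhead' : L.head hL = R.head hR := by
    simpa [List.head?_eq_some_head hL, List.head?_eq_some_head hR] using hhead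
  have hi : L.getLast hL = i := by simpa [List.getLast?_eq_some_getLast hL] using hLlast
  have hj : R.getLast hR = j := by simpa [List.getLast?_eq_some_getLast hR] using hRlast
  let w := ((SimpleGraph.Walk.ofSupport L hL (toAdj hLchain)).reverse.append
    ((SimpleGraph.Walk.ofSupport R hR (toAdj hRchain)).copy hhead'.symm rfl)).copy hi hj
  have hsupport : w.support = L.reverse ++ R.tail := by
    simp only [w, SimpleGraph.Walk.support_copy, SimpleGraph.Walk.support_append,
      SimpleGraph.Walk.support_reverse, SimpleGraph.Walk.support_ofSupport]
  refine ⟨w, ?_, hsupport⟩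
  rw [SimpleGraph.Walk.isPath_def, hsupport]
  exact ((List.reverse_perm L).append_right R.tail).nodup_iff.2 hnodup

theorem subsingleton_trek (hG : G.underlying.IsAcyclic) (i j : Fin n) :
    Subsingleton (Trek G i j) := by
  refine ⟨fun ⟨⟨⟨L, _⟩, ⟨R, _⟩⟩, hP⟩ ⟨⟨⟨L', _⟩, ⟨R', _⟩⟩, hQ⟩ => ?_⟩
  obtain ⟨w, hw, hwsupport⟩ := hP.exists_isPath
  obtain ⟨w', hw', hw'support⟩ := hQ.exists_isPath
  have hww' : w = w' :=
    congrArg Subtype.val ((hG.subsingleton_path i j).elim ⟨w, hw⟩ ⟨w', hw'⟩)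
  obtain ⟨rfl, rfl⟩ :=
    hP.eq_of_reverse_append_tail_eq hQ (by rw [← hwsupport, ← hw'support, hww'])
  rfl

theorem Trek.poly_mem (P : Trek G i j) : P.poly ∈ monicMonomialsWithZero (Vars n) ℂ :=
  mul_mem (X_mem_monicMonomialsWithZero _) <| list_prod_mem fun _ hq => by
    obtain ⟨e, -, rfl⟩ := List.mem_map.1 hq
    exact X_mem_monicMonomialsWithZero _

theorem trekPoly_mem (hG : G.underlying.IsAcyclic) (i j : Fin n) :
    trekPoly G i j ∈ monicMonomialsWithZero (Vars n) ℂ := by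
  have := subsingleton_trek hG i j
  rcases isEmpty_or_nonempty (Trek G i j) with _ | ⟨⟨P⟩⟩
  · rw [trekPoly, Finset.univ_eq_empty, Finset.sum_empty]
    exact zero_mem_monicMonomialsWithZero
  · rw [trekPoly, Fintype.sum_subsingleton _ P]
    exact P.poly_mem

end DAG

open DAG MvPolynomial in
/-- If `T` is a polytree then there is at most one trek between any two vertices,
each trek-rule polynomial `σ_{ij}(a,λ)` is a monomial, and the vanishing ideal `I_T`
is a toric ideal: a prime ideal generated by binomials. -/
theorem polytree_toric {n : ℕ} (T : DAG n) (hT : T.IsPolytree) :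
    (∀ i j : Fin n, Subsingleton (Trek T i j)) ∧
    (∀ i j : Fin n, ∃ (m : Vars n →₀ ℕ) (c : ℂ), trekPoly T i j = monomial m c) ∧
    (gaussianIdeal T).IsPrime ∧
    (∃ S : Set (MvPolynomial (SymIdx n) ℂ), gaussianIdeal T = Ideal.span S ∧
      ∀ f ∈ S, ∃ (m₁ m₂ : SymIdx n →₀ ℕ) (c₁ c₂ : ℂ),
        f = monomial m₁ c₁ + monomial m₂ c₂) := by
  have hmem := trekPoly_mem hT.isAcyclic
  refine ⟨subsingleton_trek hT.isAcyclic, fun i j => ?_, RingHom.ker_isPrime _,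
    _, ker_eq_span_binomials (phi T) fun s => ?_, fun _ hg => hg.2⟩
  · rcases hmem i j with h | ⟨m, h⟩
    exacts [⟨0, 0, by rw [h, monomial_zero]⟩, ⟨m, 1, h⟩]
  · rw [phi, aeval_X]
    exact hmem _ _
end

section
/- Join of parametrized ideals: let φ : C[x₁,...,x_m] → C[θ] and ψ : C[x₁,...,x_m] → C[η] be ring homomorphisms into polynomial rings in disjoint sets of variables, with I = ker φ and J = ker ψ. Then the join ideal I ∗ J, defined as (I(y) + J(z) + ⟨x_i − y_i − z_i : i ∈ [m]⟩) ∩ C[x], equals the kernel of the map φ + ψ : C[x] → C[θ, η] sending x_i ↦ φ(x_i) + ψ(x_i). -/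
/-!
Let `Θ : ℂ[y, z] → ℂ[θ, η]` send `yᵢ ↦ φ(xᵢ)` and `zᵢ ↦ ψ(xᵢ)`. Under `ℂ[y, z] ≅ ℂ[x] ⊗ ℂ[x]`
and `ℂ[θ, η] ≅ ℂ[θ] ⊗ ℂ[η]` the map `Θ` becomes `φ ⊗ ψ`. This factors as the surjection onto
`im φ ⊗ im ψ`, whose kernel is `I ⊗ ℂ[x] + ℂ[x] ⊗ J` by right exactness, followed by the
inclusion `im φ ⊗ im ψ → ℂ[θ] ⊗ ℂ[η]`, injective by flatness over a field. Hence
`ker Θ = I(y) + J(z)`. The substitution `xᵢ ↦ yᵢ + zᵢ` is a retraction of `ℂ[x, y, z]` onto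
`ℂ[y, z]` with kernel `⟨xᵢ − yᵢ − zᵢ⟩`, so composing it with `Θ` gives a map with kernel
`I(y) + J(z) + ⟨xᵢ − yᵢ − zᵢ⟩`, whose restriction to `ℂ[x]` is `φ + ψ`.
-/

open MvPolynomial TensorProduct

namespace Algebra.TensorProduct

variable {k A B C D : Type*} [Field k] [Ring A] [Ring B] [Ring C] [Ring D]
  [Algebra k A] [Algebra k B] [Algebra k C] [Algebra k D]

theorem ker_map_of_field (f : A →ₐ[k] C) (g : B →ₐ[k] D) :
    RingHom.ker (map f g) =
      (RingHom.ker f).map (includeLeft : A →ₐ[k] A ⊗[k] B) ⊔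
        (RingHom.ker g).map (includeRight : B →ₐ[k] A ⊗[k] B) := by
  have hfactor : map f g =
      (map f.range.val g.range.val).comp (map f.rangeRestrict g.rangeRestrict) := by
    rw [← map_comp]; rfl
  have hinj : Function.Injective (map f.range.val g.range.val) :=
    TensorProduct.map_injective_of_flat_flat _ _ Subtype.val_injective Subtype.val_injective
  rw [hfactor, ← AlgHom.comap_ker, (RingHom.injective_iff_ker_eq_bot _).mp hinj,
    ← RingHom.ker_eq_comap_bot, map_ker _ _ f.rangeRestrict_surjective g.rangeRestrict_surjective,
    AlgHom.ker_rangeRestrict, AlgHom.ker_rangeRestrict]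

end Algebra.TensorProduct

namespace AlgHom

variable {R A B C : Type*} [CommSemiring R] [Ring A] [Ring B] [Semiring C]
  [Algebra R A] [Algebra R B] [Algebra R C]

theorem ker_comp_of_leftInverse {f : A →ₐ[R] B} {s : B →ₐ[R] A}
    (hs : Function.LeftInverse f s) (g : B →ₐ[R] C) :
    RingHom.ker (g.comp f) = (RingHom.ker g).map s ⊔ RingHom.ker f := by
  refine le_antisymm (fun p hp => ?_) (sup_le ?_ ?_)
  · have hfp : f p ∈ RingHom.ker g := hp
    have hdiff : p - s (f p) ∈ RingHom.ker f := by
      rw [RingHom.mem_ker, map_sub, hs, sub_self]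
    rw [← add_sub_cancel (s (f p)) p]
    exact Ideal.add_mem _ (Ideal.mem_sup_left (Ideal.mem_map_of_mem s hfp))
      (Ideal.mem_sup_right hdiff)
  · rw [Ideal.map_le_iff_le_comap]
    intro q hq
    rw [Ideal.mem_comap, RingHom.mem_ker, comp_apply, hs]
    exact hq
  · intro p hp
    rw [RingHom.mem_ker, comp_apply, RingHom.mem_ker.mp hp, map_zero]

end AlgHom

namespace MvPolynomial

section TensorEquivSum

variable {R σ τ : Type*} [CommSemiring R]

theorem tensorEquivSum_comp_includeLeft :
    (tensorEquivSum R σ τ R).toAlgHom.comp Algebra.TensorProduct.includeLeft =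
      rename Sum.inl := by
  ext i; simp

theorem tensorEquivSum_comp_includeRight :
    (tensorEquivSum R σ τ R).toAlgHom.comp Algebra.TensorProduct.includeRight =
      rename Sum.inr := by
  ext i; simp

@[simp]
theorem tensorEquivSum_tmul_one (p : MvPolynomial σ R) :
    tensorEquivSum R σ τ R (p ⊗ₜ 1) = rename Sum.inl p :=
  AlgHom.congr_fun tensorEquivSum_comp_includeLeft p

@[simp]
theorem tensorEquivSum_one_tmul (q : MvPolynomial τ R) :
    tensorEquivSum R σ τ R (1 ⊗ₜ q) = rename Sum.inr q :=
  AlgHom.congr_fun tensorEquivSum_comp_includeRight q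

@[simp]
theorem tensorEquivSum_symm_X_inl (i : σ) :
    (tensorEquivSum R σ τ R).symm (X (Sum.inl i)) = X i ⊗ₜ 1 := by
  rw [AlgEquiv.symm_apply_eq, tensorEquivSum_X_tmul_one]

@[simp]
theorem tensorEquivSum_symm_X_inr (j : τ) :
    (tensorEquivSum R σ τ R).symm (X (Sum.inr j)) = 1 ⊗ₜ X j := by
  rw [AlgEquiv.symm_apply_eq, tensorEquivSum_one_tmul_X]

end TensorEquivSum

theorem ker_aeval_sumElim_rename {k σ τ α β : Type*} [Field k]
    (φ : MvPolynomial σ k →ₐ[k] MvPolynomial α k)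
    (ψ : MvPolynomial τ k →ₐ[k] MvPolynomial β k) :
    RingHom.ker (aeval (Sum.elim (fun i => rename Sum.inl (φ (X i)))
        (fun j => rename Sum.inr (ψ (X j)))) :
        MvPolynomial (σ ⊕ τ) k →ₐ[k] MvPolynomial (α ⊕ β) k) =
      (RingHom.ker φ).map (rename Sum.inl) ⊔ (RingHom.ker ψ).map (rename Sum.inr) := by
  set e := tensorEquivSum k σ τ k
  set e' := tensorEquivSum k α β k
  have hfactor : aeval (Sum.elim (fun i => rename Sum.inl (φ (X i)))
        (fun j => rename Sum.inr (ψ (X j)))) =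
      (e'.toAlgHom.comp (Algebra.TensorProduct.map φ ψ)).comp e.symm.toAlgHom := by
    refine algHom_ext fun i => ?_
    cases i <;> simp [e, e']
  have hker : RingHom.ker (e'.toAlgHom.comp (Algebra.TensorProduct.map φ ψ)) =
      RingHom.ker (Algebra.TensorProduct.map φ ψ) := by
    ext x
    simp only [RingHom.mem_ker, AlgHom.comp_apply]
    exact e'.map_eq_zero_iff
  have hcomap (J : Ideal (MvPolynomial σ k ⊗[k] MvPolynomial τ k)) :
      J.comap e.symm.toAlgHom = J.map e.toAlgHom :=
    Ideal.comap_symm e.toRingEquiv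
  rw [hfactor, ← AlgHom.comap_ker, hker, Algebra.TensorProduct.ker_map_of_field, hcomap,
    Ideal.map_sup, Ideal.map_mapₐ, Ideal.map_mapₐ, tensorEquivSum_comp_includeLeft,
    tensorEquivSum_comp_includeRight]

theorem sub_mem_of_forall_sub_X_mem {R ι A : Type*} [CommSemiring R] [CommRing A] [Algebra R A]
    {f g : MvPolynomial ι R →ₐ[R] A} {I : Ideal A} (h : ∀ i, f (X i) - g (X i) ∈ I)
    (p : MvPolynomial ι R) : f p - g p ∈ I := by
  have hmk : (Ideal.Quotient.mkₐ R I).comp f = (Ideal.Quotient.mkₐ R I).comp g :=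
    algHom_ext fun i => by simpa [Ideal.Quotient.mk_eq_mk_iff_sub_mem] using h i
  simpa [Ideal.Quotient.mk_eq_mk_iff_sub_mem] using AlgHom.congr_fun hmk p

section Substitution

variable {R ι κ : Type*} [CommRing R]

theorem aeval_sumElim_X_rename_inr (g : ι → MvPolynomial κ R) (q : MvPolynomial κ R) :
    aeval (Sum.elim g X) (rename Sum.inr q) = q := by
  rw [aeval_rename, Sum.elim_comp_inr, aeval_X_left_apply]

theorem ker_aeval_sumElim_X (g : ι → MvPolynomial κ R) :
    RingHom.ker (aeval (Sum.elim g X) : MvPolynomial (ι ⊕ κ) R →ₐ[R] MvPolynomial κ R) =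
      Ideal.span (Set.range fun i => X (Sum.inl i) - rename Sum.inr (g i)) := by
  refine le_antisymm (fun p hp => ?_) (Ideal.span_le.mpr ?_)
  · have hsub := sub_mem_of_forall_sub_X_mem
      (f := AlgHom.id R _) (g := (rename Sum.inr).comp (aeval (Sum.elim g X)))
      (I := Ideal.span (Set.range fun i => X (Sum.inl i) - rename Sum.inr (g i)))
      (fun i => ?_) p
    · rwa [AlgHom.comp_apply, RingHom.mem_ker.mp hp, map_zero, sub_zero] at hsub
    · cases i with
      | inl i =>
        rw [AlgHom.id_apply, AlgHom.comp_apply, aeval_X, Sum.elim_inl]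
        exact Ideal.subset_span ⟨i, rfl⟩
      | inr j => simp
  · rintro _ ⟨i, rfl⟩
    rw [SetLike.mem_coe, RingHom.mem_ker, map_sub, aeval_X, Sum.elim_inl,
      aeval_sumElim_X_rename_inr, sub_self]

theorem comap_rename_inl_sup_span_eq_ker_aeval_add {A : Type*} [CommSemiring A] [Algebra R A]
    (Θ : MvPolynomial (ι ⊕ ι) R →ₐ[R] A) :
    Ideal.comap (rename Sum.inl : MvPolynomial ι R →ₐ[R] MvPolynomial (ι ⊕ (ι ⊕ ι)) R)
        ((RingHom.ker Θ).map (rename Sum.inr) ⊔ Ideal.span {f | ∃ i : ι,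
          f = X (Sum.inl i) - X (Sum.inr (Sum.inl i)) - X (Sum.inr (Sum.inr i))}) =
      RingHom.ker (aeval fun i => Θ (X (Sum.inl i)) + Θ (X (Sum.inr i))) := by
  have hspan : {f : MvPolynomial (ι ⊕ (ι ⊕ ι)) R | ∃ i : ι,
        f = X (Sum.inl i) - X (Sum.inr (Sum.inl i)) - X (Sum.inr (Sum.inr i))} =
      Set.range fun i => X (Sum.inl i) - rename Sum.inr (X (Sum.inl i) + X (Sum.inr i)) := by
    ext f; simp [eq_comm, sub_sub]
  rw [hspan, ← ker_aeval_sumElim_X, ← AlgHom.ker_comp_of_leftInverse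
    (aeval_sumElim_X_rename_inr _), AlgHom.comap_ker]
  exact congrArg RingHom.ker (algHom_ext fun i => by simp)

end Substitution

end MvPolynomial

/-- Join of parametrized ideals: if `I = ker φ` and `J = ker ψ` for ring maps
`φ : ℂ[x₁,…,x_m] → ℂ[θ]` and `ψ : ℂ[x₁,…,x_m] → ℂ[η]` into polynomial rings in
disjoint sets of variables, then the join ideal
`I ∗ J = (I(y) + J(z) + ⟨xᵢ − yᵢ − zᵢ⟩) ∩ ℂ[x]` equals the kernel of
`φ + ψ : ℂ[x] → ℂ[θ, η]`, `xᵢ ↦ φ(xᵢ) + ψ(xᵢ)`. -/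
theorem join_of_parametrized_ideals (m : ℕ) {α β : Type*}
    (φ : MvPolynomial (Fin m) ℂ →ₐ[ℂ] MvPolynomial α ℂ)
    (ψ : MvPolynomial (Fin m) ℂ →ₐ[ℂ] MvPolynomial β ℂ) :
    Ideal.comap
        (rename (Sum.inl : Fin m → Fin m ⊕ (Fin m ⊕ Fin m)) :
          MvPolynomial (Fin m) ℂ →ₐ[ℂ] MvPolynomial (Fin m ⊕ (Fin m ⊕ Fin m)) ℂ)
        (Ideal.map
            (rename ((Sum.inr ∘ Sum.inl) : Fin m → Fin m ⊕ (Fin m ⊕ Fin m)) :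
              MvPolynomial (Fin m) ℂ →ₐ[ℂ] MvPolynomial (Fin m ⊕ (Fin m ⊕ Fin m)) ℂ)
            (RingHom.ker φ) ⊔
          Ideal.map
            (rename ((Sum.inr ∘ Sum.inr) : Fin m → Fin m ⊕ (Fin m ⊕ Fin m)) :
              MvPolynomial (Fin m) ℂ →ₐ[ℂ] MvPolynomial (Fin m ⊕ (Fin m ⊕ Fin m)) ℂ)
            (RingHom.ker ψ) ⊔
          Ideal.span {f | ∃ i : Fin m,
            f = X (Sum.inl i) - X (Sum.inr (Sum.inl i)) - X (Sum.inr (Sum.inr i))}) =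
      RingHom.ker
        (aeval (fun i : Fin m =>
            rename (Sum.inl : α → α ⊕ β) (φ (X i)) +
            rename (Sum.inr : β → α ⊕ β) (ψ (X i))) :
          MvPolynomial (Fin m) ℂ →ₐ[ℂ] MvPolynomial (α ⊕ β) ℂ) := by
  let Θ : MvPolynomial (Fin m ⊕ Fin m) ℂ →ₐ[ℂ] MvPolynomial (α ⊕ β) ℂ :=
    aeval (Sum.elim (fun i => rename Sum.inl (φ (X i))) (fun j => rename Sum.inr (ψ (X j))))
  have hsplit :
      (RingHom.ker φ).map (rename (Sum.inr ∘ Sum.inl : Fin m → Fin m ⊕ (Fin m ⊕ Fin m))) ⊔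
        (RingHom.ker ψ).map (rename (Sum.inr ∘ Sum.inr : Fin m → Fin m ⊕ (Fin m ⊕ Fin m))) =
      (RingHom.ker Θ).map (rename Sum.inr) := by
    rw [ker_aeval_sumElim_rename, Ideal.map_sup, Ideal.map_mapₐ, Ideal.map_mapₐ,
      rename_comp_rename, rename_comp_rename]
  rw [hsplit, comap_rename_inl_sup_span_eq_ker_aeval_add]
  refine congrArg RingHom.ker (algHom_ext fun i => ?_)
  simp [Θ]
end
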